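/- arXiv:1706.00863 — 6 statements merged into one kernel-verified Lean document; each statement's English description precedes it below -/
import Mathlib

section
/- Let G = C_n(S) be a circulant graph that is not complete (i.e., S ≠ {1,2,...,⌊n/2⌋}). Then the maximum size of a clique of G is at most ⌊n/2⌋. -/
/-- Circular distance on `ZMod n`. -/
def circDist (n : ℕ) (a b : ZMod n) : ℕ := min (a - b).val (b - a).val

/-- The circulant graph `C_n(S)`. -/
def circGraph (n : ℕ) (S : Set ℕ) : SimpleGraph (ZMod n) where
  Adj a b := a ≠ b ∧ circDist n a b ∈ S
  symm := by
    constructor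
    intro a b h
    exact ⟨h.1.symm, by simpa [circDist, min_comm] using h.2⟩
  loopless := by constructor; intro a h; exact h.1 rfl

/-- `A` is an independent set of `C_n(S)`. -/
def IsIndepSet' (n : ℕ) (S : Set ℕ) (A : Finset (ZMod n)) : Prop :=
  ∀ a ∈ A, ∀ b ∈ A, ¬ (circGraph n S).Adj a b

/-- `A` is a clique of `C_n(S)`. -/
def IsClique' (n : ℕ) (S : Set ℕ) (A : Finset (ZMod n)) : Prop :=
  ∀ a ∈ A, ∀ b ∈ A, a ≠ b → (circGraph n S).Adj a b

/-- The number of independent sets of cardinality `i` (this is `f_{i-1}`). -/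
noncomputable def indepCount (n : ℕ) (S : Set ℕ) (i : ℕ) : ℕ :=
  Nat.card {A : Finset (ZMod n) // A.card = i ∧ IsIndepSet' n S A}

/-- The number of cliques of cardinality `i`. -/
noncomputable def cliqueCount (n : ℕ) (S : Set ℕ) (i : ℕ) : ℕ :=
  Nat.card {A : Finset (ZMod n) // A.card = i ∧ IsClique' n S A}

/-- The reduced Euler characteristic of the independence complex of `C_n(S)`. -/
noncomputable def redEuler (n : ℕ) (S : Set ℕ) : ℤ :=
  ∑ i ∈ Finset.range (n + 1), (-1) ^ (i + 1) * (indepCount n S i : ℤ)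

/-! If `d ∈ {1, …, ⌊n/2⌋}` is missing from `S`, then no two vertices of a clique `F` are at
circular distance `d`, so `F` and its translate `F + d` are disjoint subsets of `ZMod n`
and `2 * #F ≤ n`. -/

theorem circDist_add_natCast_self {n d : ℕ} [NeZero n] (hd : d ≤ n / 2) (a : ZMod n) :
    circDist n (a + d) a = d := by
  have hdn : d < n := hd.trans_lt (Nat.div_lt_self (NeZero.pos n) one_lt_two)
  have hval : (d : ZMod n).val = d := ZMod.val_natCast_of_lt hdn
  have hneg : d ≤ (-(d : ZMod n)).val := by
    rw [ZMod.neg_val, hval]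
    split_ifs with h
    · rw [h, ZMod.val_zero] at hval; omega
    · omega
  rw [circDist, add_sub_cancel_left, sub_add_cancel_left, hval]
  exact min_eq_left hneg

theorem IsClique'.disjoint_image_add_natCast {n d : ℕ} {S : Set ℕ} {F : Finset (ZMod n)}
    (hF : IsClique' n S F) (hd1 : 1 ≤ d) (hd : d ≤ n / 2) (hdS : d ∉ S) :
    Disjoint F (F.image (· + (d : ZMod n))) := by
  have : NeZero n := ⟨by omega⟩
  rw [Finset.disjoint_right]
  rintro _ hx hxF
  obtain ⟨y, hy, rfl⟩ := Finset.mem_image.1 hx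
  have hne : y + (d : ZMod n) ≠ y := by
    rw [Ne, add_eq_left, ZMod.natCast_eq_zero_iff]
    exact fun hdvd => absurd (Nat.le_of_dvd (by omega) hdvd) (by omega)
  exact hdS (circDist_add_natCast_self hd y ▸ (hF _ hxF _ hy hne).2)

theorem IsClique'.two_mul_card_le {n d : ℕ} {S : Set ℕ} {F : Finset (ZMod n)}
    (hF : IsClique' n S F) (hd1 : 1 ≤ d) (hd : d ≤ n / 2) (hdS : d ∉ S) :
    2 * F.card ≤ n := by
  have : NeZero n := ⟨by omega⟩
  calc 2 * F.card = (F ∪ F.image (· + (d : ZMod n))).card := by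
        rw [Finset.card_union_of_disjoint (hF.disjoint_image_add_natCast hd1 hd hdS),
          Finset.card_image_of_injective _ (add_left_injective _), two_mul]
    _ ≤ n := (Finset.card_le_univ _).trans_eq (ZMod.card n)

theorem stmt1_general (n : ℕ) (S : Set ℕ) (hS : S ⊆ Set.Icc 1 (n / 2))
    (hne : S ≠ Set.Icc 1 (n / 2)) :
    ∀ F : Finset (ZMod n), IsClique' n S F → F.card ≤ n / 2 := by
  obtain ⟨d, ⟨hd1, hd⟩, hdS⟩ := Set.exists_of_ssubset (hS.ssubset_of_ne hne)
  intro F hF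
  have := hF.two_mul_card_le hd1 hd hdS
  omega

theorem stmt1 (n : ℕ) (hn : 0 < n) (S : Set ℕ) (hS : S ⊆ Set.Icc 1 (n / 2))
    (hne : S ≠ Set.Icc 1 (n / 2)) :
    ∀ F : Finset (ZMod n), IsClique' n S F → F.card ≤ n / 2 :=
  stmt1_general n S hS hne
end

section
/- Let p be a prime, k > 0, n = p^k, and let G = C_n(S) be a non-empty circulant graph (S ≠ ∅). Then the reduced Euler characteristic χ̃(Δ(G)) = Σ_{i=0}^{d} (-1)^{i-1} f_{i-1} of the independence complex Δ(G) of G is nonzero. -/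
open Finset MulAction Pointwise

/-!
Translations by the `p`-group `ZMod (p ^ k)` permute the independent sets of each size. A
translation-invariant vertex set is empty or everything, and the whole vertex set is not
independent once `S ≠ ∅`. Counting fixed points mod `p`, every `f_{i-1}` with `i > 0` is divisible
by `p`, so `χ̃ ≡ -f_{-1} = -1 (mod p)`.
-/

theorem IsPGroup.card_subtype_modEq_card_subtype_fixedPoints {p : ℕ} [Fact p.Prime]
    {G α : Type*} [Group G] [MulAction G α] [Finite α] (hG : IsPGroup p G) (P : α → Prop)
    (hP : ∀ (g : G) (a : α), P a → P (g • a)) :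
    Nat.card {a // P a} ≡ Nat.card {a // P a ∧ a ∈ fixedPoints G α} [MOD p] := by
  let M : SubMulAction G α := ⟨{a | P a}, fun g _ => hP g _⟩
  have hfixed : fixedPoints G M ≃ {a // P a ∧ a ∈ fixedPoints G α} :=
    { toFun a := ⟨a.1.1, a.1.2, fun g => congrArg Subtype.val (a.2 g)⟩
      invFun a := ⟨⟨a.1, a.2.1⟩, fun g => Subtype.ext (a.2.2 g)⟩ }
  rw [← Nat.card_congr hfixed]
  exact hG.card_modEq_card_fixedPoints M

theorem Finset.eq_empty_or_eq_univ_of_forall_vadd_eq {G : Type*} [AddGroup G] [Fintype G]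
    [DecidableEq G] {A : Finset G} (hA : ∀ g : G, g +ᵥ A = A) : A = ∅ ∨ A = univ := by
  refine A.eq_empty_or_nonempty.imp_right fun ⟨a, ha⟩ => eq_univ_of_forall fun x => ?_
  rw [← hA (x - a)]
  exact mem_vadd_finset.2 ⟨a, ha, sub_add_cancel x a⟩

section Circulant

variable {n : ℕ} {S : Set ℕ}

theorem circGraph_adj_add_left_iff (g a b : ZMod n) :
    (circGraph n S).Adj (g + a) (g + b) ↔ (circGraph n S).Adj a b := by
  simp only [circGraph, circDist, add_sub_add_left_eq_sub, ne_eq, add_right_inj]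

theorem IsIndepSet'.vadd {A : Finset (ZMod n)} (hA : IsIndepSet' n S A) (g : ZMod n) :
    IsIndepSet' n S (g +ᵥ A) := by
  intro x hx y hy
  obtain ⟨a, ha, rfl⟩ := mem_vadd_finset.1 hx
  obtain ⟨b, hb, rfl⟩ := mem_vadd_finset.1 hy
  rw [vadd_eq_add, vadd_eq_add, circGraph_adj_add_left_iff]
  exact hA a ha b hb

theorem circGraph_ne_bot (hS : S ⊆ Set.Icc 1 (n / 2)) (hSne : S.Nonempty) :
    circGraph n S ≠ ⊥ := by
  obtain ⟨s, hs⟩ := hSne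
  obtain ⟨hs1, hs2⟩ := hS hs
  have : NeZero n := ⟨by omega⟩
  have hval : (s : ZMod n).val = s := ZMod.val_natCast_of_lt (by omega)
  have hs0 : (s : ZMod n) ≠ 0 := fun h => by simp [h] at hval; omega
  refine SimpleGraph.ne_bot_iff_exists_adj.2 ⟨s, 0, hs0, ?_⟩
  rw [circDist, sub_zero, zero_sub, ZMod.neg_val, if_neg hs0, hval, min_eq_left (by omega)]
  exact hs

theorem indepCount_zero : indepCount n S 0 = 1 := by
  refine Nat.card_eq_one_iff_exists.2 ⟨⟨∅, card_empty, by simp [IsIndepSet']⟩, fun A => ?_⟩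
  exact Subtype.ext (card_eq_zero.1 A.2.1)

theorem indepCount_modEq_zero {p k : ℕ} [Fact p.Prime] (hn : n = p ^ k)
    (hS : circGraph n S ≠ ⊥) {i : ℕ} (hi : i ≠ 0) : indepCount n S i ≡ 0 [MOD p] := by
  have : NeZero n := ⟨hn ▸ pow_ne_zero k (Fact.out : p.Prime).ne_zero⟩
  have hG : IsPGroup p (Multiplicative (ZMod n)) := IsPGroup.of_card (n := k) (by
    rw [← hn]; exact Nat.card_zmod n)
  refine (hG.card_subtype_modEq_card_subtype_fixedPoints
    (fun A : Finset (ZMod n) => A.card = i ∧ IsIndepSet' n S A) ?_).trans ?_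
  · rintro g A ⟨hcard, hA⟩
    exact ⟨(card_vadd_finset _ A).trans hcard, hA.vadd _⟩
  · convert Nat.ModEq.refl 0
    refine Nat.card_eq_zero.2 (.inl ⟨fun ⟨A, ⟨hcard, hA⟩, hfix⟩ => ?_⟩)
    obtain ⟨a, b, hab⟩ := SimpleGraph.ne_bot_iff_exists_adj.1 hS
    obtain rfl | rfl :=
      eq_empty_or_eq_univ_of_forall_vadd_eq fun g => mem_fixedPoints.1 hfix (.ofAdd g)
    · exact hi (hcard ▸ card_empty)
    · exact hA a (mem_univ a) b (mem_univ b) hab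

theorem redEuler_modEq_neg_one {p k : ℕ} [Fact p.Prime] (hn : n = p ^ k)
    (hS : circGraph n S ≠ ⊥) : redEuler n S ≡ -1 [ZMOD p] := by
  rw [← ZMod.intCast_eq_intCast_iff, redEuler, Int.cast_sum, sum_eq_single 0]
  · simp [indepCount_zero]
  · intro i _ hi
    have hdvd := (ZMod.natCast_eq_natCast_iff _ _ p).2 (indepCount_modEq_zero hn hS hi)
    simp [hdvd]
  · simp

end Circulant

theorem stmt3_general (p k n : ℕ) (hp : p.Prime) (hn : n = p ^ k)
    (S : Set ℕ) (hS : S ⊆ Set.Icc 1 (n / 2)) (hSne : S.Nonempty) :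
    redEuler n S ≠ 0 := by
  have : Fact p.Prime := ⟨hp⟩
  intro h
  have hmod := redEuler_modEq_neg_one hn (circGraph_ne_bot hS hSne)
  rw [h, ← ZMod.intCast_eq_intCast_iff] at hmod
  simp at hmod

theorem stmt3 (p k n : ℕ) (hp : p.Prime) (hk : 0 < k) (hn : n = p ^ k)
    (S : Set ℕ) (hS : S ⊆ Set.Icc 1 (n / 2)) (hSne : S.Nonempty) :
    redEuler n S ≠ 0 :=
  stmt3_general p k n hp hn S hS hSne
end

section
/- Let n = 2q with q > 1 odd, and let G = C_n(S) be a non-complete circulant graph. Then ω(G) < q if and only if {2, 4, ..., q-1} ⊄ S; i.e., G has a clique of size q if and only if all even numbers 2, 4, ..., q-1 belong to S. -/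
/-!
The even residues of `ZMod (2q)` form a clique of size `q` as soon as every even distance
`2, 4, …, q - 1` lies in `S`: the circular distance between two of them is even, positive and at
most `q`, hence at most `q - 1` since `q` is odd.

Conversely, if an even `m ≤ q - 1` is missing from `S`, then a clique `F` is disjoint from its
translate `F + m`. If `|F| ≥ q`, this forces `F + m = Fᶜ`, so translating `q` times by `m` sends
`F` to `Fᶜ` because `q` is odd; but `q • m = 0` in `ZMod (2q)` because `m` is even.
-/

open Finset

section Translation
variable {G : Type*} [AddGroup G] {F : Finset G} {c : G}

theorem sub_mem_iff_notMem_of_forall_add_notMem [Fintype G] [DecidableEq G]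
    (hF : ∀ x ∈ F, x + c ∉ F) (hcard : Fintype.card G ≤ 2 * #F) (x : G) : x - c ∈ F ↔ x ∉ F := by
  have hsub : F.map (Equiv.addRight c).toEmbedding ⊆ Fᶜ := by
    intro y hy
    obtain ⟨x, hx, rfl⟩ := mem_map.mp hy
    exact mem_compl.mpr (hF x hx)
  have hmap : F.map (Equiv.addRight c).toEmbedding = Fᶜ :=
    eq_of_subset_of_card_le hsub (by rw [card_compl, card_map]; omega)
  rw [← mem_compl, ← hmap, mem_map_equiv]
  simp [sub_eq_add_neg]

theorem add_nsmul_mem_iff (hF : ∀ x, x - c ∈ F ↔ x ∉ F) (k : ℕ) (x : G) :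
    x + k • c ∈ F ↔ (Even k ↔ x ∈ F) := by
  induction k with
  | zero => simp
  | succ k ih =>
    have := hF (x + (k + 1) • c)
    rw [succ_nsmul, ← add_assoc, add_sub_cancel_right, ih] at this
    rw [Nat.even_add_one, succ_nsmul, ← add_assoc]
    tauto

theorem two_mul_card_lt_of_forall_add_notMem [Fintype G] [DecidableEq G] {k : ℕ} (hk : Odd k)
    (hkc : k • c = 0) (hF : ∀ x ∈ F, x + c ∉ F) : 2 * #F < Fintype.card G := by
  by_contra! hcard
  have := add_nsmul_mem_iff (sub_mem_iff_notMem_of_forall_add_notMem hF hcard) k 0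
  rw [hkc, add_zero] at this
  simp only [Nat.not_even_iff_odd.mpr hk, false_iff] at this
  tauto

end Translation

theorem circDist_comm (n : ℕ) (a b : ZMod n) : circDist n a b = circDist n b a :=
  min_comm _ _

theorem circDist_add_natCast {n m : ℕ} (hm0 : 0 < m) (hmn : m < n) (a : ZMod n) :
    circDist n (a + m) a = min m (n - m) := by
  have : NeZero n := ⟨by omega⟩
  have hval : (m : ZMod n).val = m := ZMod.val_natCast_of_lt hmn
  have hm : (m : ZMod n) ≠ 0 := fun h => by simp [h] at hval; omega
  rw [circDist, add_sub_cancel_left, sub_add_cancel_left, ZMod.neg_val, if_neg hm, hval]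

theorem circDist_two_mul_mem {q : ℕ} (hq : Odd q) {S : Set ℕ}
    (hS : {m : ℕ | Even m ∧ 2 ≤ m ∧ m ≤ q - 1} ⊆ S) {i j : ℕ} (hji : j < i) (hiq : i < q) :
    circDist (2 * q) ((2 * i : ℕ) : ZMod (2 * q)) ((2 * j : ℕ) : ZMod (2 * q)) ∈ S := by
  have hsplit : ((2 * i : ℕ) : ZMod (2 * q)) =
      ((2 * j : ℕ) : ZMod (2 * q)) + ((2 * (i - j) : ℕ) : ZMod (2 * q)) := by
    rw [← Nat.cast_add]
    congr 1
    omega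
  rw [hsplit, circDist_add_natCast (by omega) (by omega)]
  have hmin : min (2 * (i - j)) (2 * q - 2 * (i - j)) = 2 * min (i - j) (q - (i - j)) := by omega
  obtain ⟨r, rfl⟩ := hq
  exact hS ⟨hmin ▸ even_two_mul _, by omega, by omega⟩

theorem exists_isClique'_card_eq {q : ℕ} (hq : Odd q) {S : Set ℕ}
    (hS : {m : ℕ | Even m ∧ 2 ≤ m ∧ m ≤ q - 1} ⊆ S) :
    ∃ F : Finset (ZMod (2 * q)), IsClique' (2 * q) S F ∧ #F = q := by
  have : NeZero (2 * q) := ⟨by obtain ⟨r, rfl⟩ := hq; omega⟩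
  have hinj : Set.InjOn (fun k : ℕ => ((2 * k : ℕ) : ZMod (2 * q))) (range q) := by
    intro i hi j hj hij
    have := congrArg ZMod.val hij
    simp only [coe_range, Set.mem_Iio] at hi hj
    rw [ZMod.val_natCast_of_lt (by omega), ZMod.val_natCast_of_lt (by omega)] at this
    omega
  refine ⟨(range q).image fun k => ((2 * k : ℕ) : ZMod (2 * q)), ?_, by
    rw [card_image_of_injOn hinj, card_range]⟩
  rintro _ ha _ hb hab
  obtain ⟨i, hi, rfl⟩ := mem_image.mp ha
  obtain ⟨j, hj, rfl⟩ := mem_image.mp hb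
  rw [mem_range] at hi hj
  refine ⟨hab, ?_⟩
  rcases lt_trichotomy i j with h | rfl | h
  · rw [circDist_comm]
    exact circDist_two_mul_mem hq hS h hj
  · exact absurd rfl hab
  · exact circDist_two_mul_mem hq hS h hi

theorem card_lt_of_isClique' {q m : ℕ} (hq : Odd q) (hm : Even m) (hm0 : 0 < m) (hmq : m ≤ q)
    {S : Set ℕ} (hmS : m ∉ S) {F : Finset (ZMod (2 * q))} (hF : IsClique' (2 * q) S F) :
    #F < q := by
  have : NeZero (2 * q) := ⟨by obtain ⟨r, rfl⟩ := hq; omega⟩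
  have hdist (x : ZMod (2 * q)) : circDist (2 * q) (x + m) x = m := by
    rw [circDist_add_natCast hm0 (by omega), min_eq_left (by omega)]
  have hF' : ∀ x ∈ F, x + m ∉ F := by
    intro x hx hxm
    have hne : x + m ≠ x := fun h => by
      have := hdist x
      rw [h, circDist, sub_self, min_self, ZMod.val_zero] at this
      omega
    exact hmS (hdist x ▸ (hF _ hxm x hx hne).2)
  have hqm : q • (m : ZMod (2 * q)) = 0 := by
    obtain ⟨s, rfl⟩ := hm
    rw [nsmul_eq_mul, ← Nat.cast_mul, ZMod.natCast_eq_zero_iff]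
    exact ⟨s, by ring⟩
  have := two_mul_card_lt_of_forall_add_notMem hq hqm hF'
  rw [ZMod.card] at this
  omega

theorem stmt5_general (q n : ℕ) (hq : Odd q) (hn : n = 2 * q)
    (S : Set ℕ) :
    (∀ F : Finset (ZMod n), IsClique' n S F → F.card < q) ↔
      ¬ ({m : ℕ | Even m ∧ 2 ≤ m ∧ m ≤ q - 1} ⊆ S) := by
  subst hn
  constructor
  · intro hlt hsub
    obtain ⟨F, hF, hcard⟩ := exists_isClique'_card_eq hq hsub
    exact (hlt F hF).ne hcard
  · intro hnsub F hF
    obtain ⟨m, ⟨hm, hm2, hmq⟩, hmS⟩ := Set.not_subset.mp hnsub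
    exact card_lt_of_isClique' hq hm (by omega) (by omega) hmS hF

theorem stmt5 (q n : ℕ) (hq : Odd q) (hq1 : 1 < q) (hn : n = 2 * q)
    (S : Set ℕ) (hS : S ⊆ Set.Icc 1 (n / 2)) (hne : S ≠ Set.Icc 1 (n / 2)) :
    (∀ F : Finset (ZMod n), IsClique' n S F → F.card < q) ↔
      ¬ ({m : ℕ | Even m ∧ 2 ≤ m ∧ m ≤ q - 1} ⊆ S) :=
  stmt5_general q n hq hn S
end

section
/- Let n = rq with q > 1 odd, and let G = C_n(S) be a circulant graph. If there exists j with 1 ≤ j ≤ (q-1)/2 such that jr ∉ S, then ω(G) ≤ (n - r)/2. -/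
/-!
The classes `V_i` are the `r` cosets of the subgroup `⟨r⟩ ≤ ℤ/n`, which has order `q` and contains
`jr`. A clique `F` never contains both `a` and `a + jr`, which are at circular distance `jr ∉ S`.
So inside each coset `F` and its translate `F + jr` are disjoint, giving `2 |F ∩ V_i| ≤ q`, i.e.
`|F ∩ V_i| ≤ (q - 1)/2` as `q` is odd; summing over the cosets gives `|F| ≤ r (q - 1)/2 = (n - r)/2`.
-/

open Finset

theorem Finset.two_mul_card_le_of_add_notMem {G : Type*} [AddGroup G] [DecidableEq G]
    {s t : Finset G} {g : G} (hst : ∀ a ∈ s, a ∈ t ∧ a + g ∈ t) (hs : ∀ a ∈ s, a + g ∉ s) :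
    2 * #s ≤ #t := by
  have hdisj : Disjoint s (s.image (· + g)) := by
    simp only [disjoint_left, mem_image, not_exists, not_and]
    rintro a ha b hb rfl
    exact hs b hb ha
  have hsub : s ∪ s.image (· + g) ⊆ t := by
    intro x hx
    rcases mem_union.1 hx with hx | hx
    · exact (hst x hx).1
    · obtain ⟨a, ha, rfl⟩ := mem_image.1 hx
      exact (hst a ha).2
  calc 2 * #s = #(s ∪ s.image (· + g)) := by
        rw [card_union_of_disjoint hdisj, card_image_of_injective _ (add_left_injective g), two_mul]
    _ ≤ #t := card_le_card hsub

theorem AddSubgroup.card_filter_mk_eq {G : Type*} [AddGroup G] [Fintype G] (H : AddSubgroup G)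
    [DecidableEq (G ⧸ H)] (c : G ⧸ H) :
    #{a : G | (a : G ⧸ H) = c} = Nat.card H := by
  have h := Nat.card_congr (QuotientAddGroup.preimageMkEquivAddSubgroupProdSet H {c})
  rw [Nat.card_prod, Nat.card_unique (α := ({c} : Set _)), mul_one] at h
  rw [← h, ← Nat.card_eq_finsetCard]
  exact Nat.card_congr (Equiv.subtypeEquivRight fun a => by simp)

theorem AddSubgroup.card_le_index_mul_of_add_notMem {G : Type*} [AddGroup G] [Fintype G] (H : AddSubgroup G) {g : G} (hg : g ∈ H) {F : Finset G}
    (hF : ∀ a ∈ F, a + g ∉ F) :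
    #F ≤ H.index * (Nat.card H / 2) := by
  classical
  have hcoset (c : G ⧸ H) : 2 * #{a ∈ F | (QuotientAddGroup.mk a : G ⧸ H) = c} ≤ Nat.card H := by
    rw [← H.card_filter_mk_eq c]
    refine two_mul_card_le_of_add_notMem (g := g) (fun a ha => ?_) (fun a ha ha' => ?_)
    · rw [mem_filter] at ha
      simp [ha.2, QuotientAddGroup.mk_add_of_mem a hg]
    · exact hF a (mem_filter.1 ha).1 (mem_filter.1 ha').1
  calc #F = ∑ c : G ⧸ H, #{a ∈ F | (QuotientAddGroup.mk a : G ⧸ H) = c} :=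
        card_eq_sum_card_fiberwise fun _ _ => mem_univ _
    _ ≤ ∑ _c : G ⧸ H, Nat.card H / 2 := sum_le_sum fun c _ => by have := hcoset c; omega
    _ = H.index * (Nat.card H / 2) := by
        rw [sum_const, card_univ, ← Nat.card_eq_fintype_card, smul_eq_mul, H.index_eq_card]

theorem ZMod.card_zmultiples_natCast_mul {r q : ℕ} (hr : 0 < r) (hq : 0 < q) :
    Nat.card (AddSubgroup.zmultiples (r : ZMod (r * q))) = q := by
  rw [Nat.card_zmultiples, ZMod.addOrderOf_coe _ (by positivity), Nat.gcd_mul_right_left,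
    Nat.mul_div_cancel_left _ hr]

theorem ZMod.index_zmultiples_natCast_mul {r q : ℕ} (hr : 0 < r) (hq : 0 < q) :
    (AddSubgroup.zmultiples (r : ZMod (r * q))).index = r := by
  have h := (AddSubgroup.zmultiples (r : ZMod (r * q))).index_mul_card
  rw [ZMod.card_zmultiples_natCast_mul hr hq, Nat.card_zmod] at h
  exact Nat.eq_of_mul_eq_mul_right hq h

theorem circDist_add_natCast_s7 {n : ℕ} [NeZero n] (a : ZMod n) {d : ℕ} (hd : 2 * d ≤ n) :
    circDist n a (a + d) = d := by
  have hval : (d : ZMod n).val = d := ZMod.val_natCast_of_lt (by have := NeZero.pos n; omega)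
  rw [circDist, sub_add_cancel_left, add_sub_cancel_left, ZMod.neg_val, hval]
  split_ifs with h0
  · rw [h0, ZMod.val_zero] at hval
    omega
  · omega

theorem IsClique'.add_natCast_notMem {n : ℕ} {S : Set ℕ} {F : Finset (ZMod n)}
    (hF : IsClique' n S F) {d : ℕ} (hd0 : 0 < d) (hd : 2 * d ≤ n) (hdS : d ∉ S) :
    ∀ a ∈ F, a + d ∉ F := by
  have : NeZero n := ⟨by omega⟩
  intro a ha had
  have hne : a ≠ a + d := fun h => by
    have := Nat.le_of_dvd hd0 ((ZMod.natCast_eq_zero_iff d n).1 (left_eq_add.1 h))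
    omega
  exact hdS (circDist_add_natCast_s7 a hd ▸ (hF a ha _ had hne).2)

theorem stmt7_general (r q n : ℕ) (hr : 0 < r) (hq : Odd q) (hn : n = r * q)
    (S : Set ℕ)
    (h : ∃ j : ℕ, 1 ≤ j ∧ j ≤ (q - 1) / 2 ∧ j * r ∉ S) :
    ∀ F : Finset (ZMod n), IsClique' n S F → F.card ≤ (n - r) / 2 := by
  intro F hF
  obtain ⟨j, hj1, hj2, hjS⟩ := h
  subst hn
  have hq0 : 0 < q := hq.pos
  have : NeZero (r * q) := ⟨by positivity⟩
  have hjr : 2 * (j * r) ≤ r * q := by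
    rw [← mul_assoc, mul_comm r]; exact Nat.mul_le_mul_right r (by omega)
  have hmem : ((j * r : ℕ) : ZMod (r * q)) ∈ AddSubgroup.zmultiples (r : ZMod (r * q)) := by
    rw [Nat.cast_mul, ← nsmul_eq_mul]
    exact AddSubgroup.nsmul_mem _ (AddSubgroup.mem_zmultiples _) j
  have hbound := AddSubgroup.card_le_index_mul_of_add_notMem _ hmem
    (hF.add_natCast_notMem (by positivity) hjr hjS)
  rw [ZMod.index_zmultiples_natCast_mul hr hq0, ZMod.card_zmultiples_natCast_mul hr hq0] at hbound
  obtain ⟨m, rfl⟩ := hq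
  have hhalf : (2 * m + 1) / 2 = m := by omega
  have hsub : r * (2 * m + 1) - r = 2 * (r * m) := Nat.sub_eq_of_eq_add (by ring)
  rw [hsub, Nat.mul_div_cancel_left _ two_pos]
  rwa [hhalf] at hbound

theorem stmt7 (r q n : ℕ) (hr : 0 < r) (hq : Odd q) (hq1 : 1 < q) (hn : n = r * q)
    (S : Set ℕ) (hS : S ⊆ Set.Icc 1 (n / 2))
    (h : ∃ j : ℕ, 1 ≤ j ∧ j ≤ (q - 1) / 2 ∧ j * r ∉ S) :
    ∀ F : Finset (ZMod n), IsClique' n S F → F.card ≤ (n - r) / 2 :=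
  stmt7_general r q n hr hq hn S h
end

section
/- Let p be an odd prime, k > 0, n = 2p^k, and let G = C_n(S) be a non-complete circulant graph with {1,...,p^k - 1} ⊄ S that contains a clique V of cardinality p^k different from the set of even vertices and the set of odd vertices. If j ∈ Z_n satisfies V + j = V, then 2p divides j. -/
/-!
Pick `d ∉ S` with `1 ≤ d < p^k`. No two vertices of the clique `V` are at distance `d`, so `V`
misses its translate `d + V`; since `|V| = n / 2`, that translate is the complement of `V`, hence
`2d` stabilizes `V` while `d` does not. If `j` is odd, then `p^k = p^k • j` stabilizes `V`, and
together with `2d` this puts `d = ((p^k + 1) / 2) • 2d - p^k • d` in the stabilizer, which is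
impossible. If `j` is even and prime to `p`, then `gcd(j, n) = 2` stabilizes `V`, so `V` is a union
of parity classes, and by cardinality exactly one of them.
-/

open Pointwise AddAction

theorem AddSubgroup.mem_of_two_nsmul_mem_of_odd_nsmul_mem {G : Type*} [AddGroup G]
    (H : AddSubgroup G) {x : G} {m : ℕ} (hm : Odd m) (h2 : 2 • x ∈ H) (hmx : m • x ∈ H) :
    x ∈ H := by
  obtain ⟨t, rfl⟩ := hm
  have hx : x = (2 * t + 1) • x - t • (2 • x) := by
    rw [succ_nsmul', ← mul_nsmul', mul_comm, add_sub_cancel_right]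
  rw [hx]
  exact H.sub_mem hmx (H.nsmul_mem h2 t)

section Stabilizer

variable {G : Type*} [AddGroup G] [DecidableEq G] {V : Finset G} {g : G}

theorem notMem_stabilizer_of_disjoint_vadd (hV : V.Nonempty) (h : Disjoint V (g +ᵥ V)) :
    g ∉ stabilizer G V := by
  intro hg
  rw [mem_stabilizer_iff.mp hg, disjoint_self] at h
  exact hV.ne_empty h

variable [Fintype G]

theorem vadd_finset_eq_compl_of_disjoint (hcard : 2 * V.card = Fintype.card G)
    (h : Disjoint V (g +ᵥ V)) : g +ᵥ V = Vᶜ :=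
  Finset.eq_of_subset_of_card_le (Finset.subset_compl_iff_disjoint_left.mpr h)
    (by rw [Finset.card_compl, Finset.card_vadd_finset]; omega)

theorem two_nsmul_mem_stabilizer_of_disjoint_vadd (hcard : 2 * V.card = Fintype.card G)
    (h : Disjoint V (g +ᵥ V)) : 2 • g ∈ stabilizer G V := by
  have hc := vadd_finset_eq_compl_of_disjoint hcard h
  rw [mem_stabilizer_finset']
  intro v hv
  rw [two_nsmul, add_vadd, ← compl_compl V, Finset.mem_compl, ← hc,
    Finset.vadd_mem_vadd_finset_iff, ← Finset.mem_compl, ← hc]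
  exact Finset.vadd_mem_vadd_finset hv

end Stabilizer

theorem Nat.gcd_two_mul_pow_eq_two {p a : ℕ} (k : ℕ) (hp : p.Prime) (hodd : Odd p)
    (ha : Even a) (hpa : ¬ p ∣ a) : a.gcd (2 * p ^ k) = 2 := by
  rw [Nat.Coprime.gcd_mul _ (Nat.coprime_two_left.mpr hodd.pow), Nat.gcd_eq_right ha.two_dvd,
    (((hp.coprime_iff_not_dvd).mpr hpa).symm.pow_right k).gcd_eq_one, mul_one]

namespace ZMod

theorem natCast_gcd_mem_zmultiples (a n : ℕ) :
    ((a.gcd n : ℕ) : ZMod n) ∈ AddSubgroup.zmultiples (a : ZMod n) := by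
  refine AddSubgroup.mem_zmultiples_iff.mpr ⟨Nat.gcdA a n, ?_⟩
  have hbezout := congrArg (Int.cast : ℤ → ZMod n) (Nat.gcd_eq_gcd_ab a n)
  push_cast [ZMod.natCast_self] at hbezout
  rw [hbezout, zsmul_eq_mul]
  ring

variable {n : ℕ} [NeZero n]

theorem natCast_mem_zmultiples_of_odd_val {m : ℕ} (hn : n = 2 * m) {x : ZMod n}
    (hx : Odd x.val) : (m : ZMod n) ∈ AddSubgroup.zmultiples x := by
  obtain ⟨t, ht⟩ := hx
  have hzero : ((2 * m : ℕ) : ZMod n) = 0 := by rw [← hn, ZMod.natCast_self]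
  convert AddSubgroup.nsmul_mem_zmultiples x m using 1
  rw [← ZMod.natCast_zmod_val x, ht, nsmul_eq_mul]
  push_cast at hzero ⊢
  linear_combination (-(t : ZMod n)) * hzero

theorem two_mem_zmultiples_of_even_val {p k : ℕ} (hp : p.Prime) (hodd : Odd p)
    (hn : n = 2 * p ^ k) {x : ZMod n} (hx : Even x.val) (hpx : ¬ p ∣ x.val) :
    (2 : ZMod n) ∈ AddSubgroup.zmultiples x := by
  have hgcd : x.val.gcd n = 2 :=
    hn ▸ Nat.gcd_two_mul_pow_eq_two (a := x.val) k hp hodd hx hpx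
  have := natCast_gcd_mem_zmultiples x.val n
  rwa [ZMod.natCast_zmod_val, hgcd, Nat.cast_ofNat] at this

theorem even_val_add_iff (hn : Even n) (a b : ZMod n) :
    Even (a + b).val ↔ (Even a.val ↔ Even b.val) := by
  rw [ZMod.val_add, hn.mod_even_iff, Nat.even_add]

theorem mem_zmultiples_two_of_even_val {x : ZMod n} (hx : Even x.val) :
    x ∈ AddSubgroup.zmultiples (2 : ZMod n) := by
  obtain ⟨t, ht⟩ := hx
  convert AddSubgroup.nsmul_mem_zmultiples (2 : ZMod n) t using 1
  rw [← ZMod.natCast_zmod_val x, ht, nsmul_eq_mul]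
  push_cast
  ring

theorem forall_mem_iff_even_or_odd_of_two_mem_stabilizer (hn : Even n) {V : Finset (ZMod n)}
    (h2 : (2 : ZMod n) ∈ stabilizer (ZMod n) V) (hV : V.Nonempty) (hVu : V ≠ Finset.univ) :
    (∀ v, v ∈ V ↔ Even v.val) ∨ (∀ v, v ∈ V ↔ ¬ Even v.val) := by
  have hpar : ∀ x ∈ V, ∀ y, (Even x.val ↔ Even y.val) → y ∈ V := by
    intro x hx y hxy
    have hval : Even (y - x).val := by
      have := even_val_add_iff hn x (y - x)
      rw [add_sub_cancel] at this
      tauto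
    have hyx := AddSubgroup.zmultiples_le.mpr h2 (mem_zmultiples_two_of_even_val hval)
    simpa using mem_stabilizer_finset'.mp hyx hx
  obtain ⟨v₀, hv₀⟩ := hV
  have hcls : ∀ v, v ∈ V ↔ (Even v.val ↔ Even v₀.val) := by
    refine fun v => ⟨fun hv => ?_, fun h => hpar v₀ hv₀ v h.symm⟩
    by_contra hdiff
    refine hVu (Finset.eq_univ_of_forall fun y => ?_)
    by_cases hy : Even v.val ↔ Even y.val
    · exact hpar v hv y hy
    · exact hpar v₀ hv₀ y (by tauto)
  by_cases h₀ : Even v₀.val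
  · exact .inl fun v => by simpa [h₀] using hcls v
  · exact .inr fun v => by simpa [h₀] using hcls v

end ZMod

section Circulant

variable {n : ℕ} [NeZero n]

theorem circDist_self_natCast_add (a : ZMod n) {d : ℕ} (hd : 2 * d ≤ n) :
    circDist n a (d + a) = d := by
  have hdn : d < n := by have := NeZero.pos n; omega
  simp only [circDist, sub_add_cancel_right, add_sub_cancel_right, ZMod.neg_val,
    ZMod.val_natCast_of_lt hdn]
  split_ifs with hd0
  · rw [← ZMod.val_eq_zero, ZMod.val_natCast_of_lt hdn] at hd0
    omega
  · omega

theorem IsClique'.disjoint_natCast_vadd {S : Set ℕ} {V : Finset (ZMod n)} (hV : IsClique' n S V)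
    {d : ℕ} (hd : 0 < d) (hdn : 2 * d ≤ n) (hdS : d ∉ S) : Disjoint V ((d : ZMod n) +ᵥ V) := by
  rw [Finset.disjoint_right]
  intro x hx hxV
  obtain ⟨w, hw, rfl⟩ := Finset.mem_vadd_finset.mp hx
  have hd0 : (d : ZMod n) ≠ 0 := by
    rw [Ne, ← ZMod.val_eq_zero, ZMod.val_natCast_of_lt (by omega)]
    omega
  have hne : w ≠ d + w := fun h => hd0 (right_eq_add.mp h)
  exact hdS (circDist_self_natCast_add w hdn ▸ (hV w hw _ hxV hne).2)

end Circulant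

theorem stmt14_general (p k n : ℕ) (hp : p.Prime) (hodd : Odd p)
    (hn : n = 2 * p ^ k) (S : Set ℕ) (hne' : ¬ (Set.Icc 1 (p ^ k - 1) ⊆ S))
    (V : Finset (ZMod n)) (hV : IsClique' n S V) (hcard : V.card = p ^ k)
    (hVeven : ¬ (∀ v : ZMod n, v ∈ V ↔ Even v.val))
    (hVodd : ¬ (∀ v : ZMod n, v ∈ V ↔ ¬ Even v.val))
    (j : ZMod n) (hj : V.image (· + j) = V) :
    2 * p ∣ j.val := by
  have hpk_pos : 0 < p ^ k := pow_pos hp.pos k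
  have : NeZero n := ⟨by omega⟩
  obtain ⟨d, ⟨hd1, hd2⟩, hdS⟩ := Set.not_subset.mp hne'
  have hdisj := hV.disjoint_natCast_vadd hd1 (by omega) hdS
  have hcardG : 2 * V.card = Fintype.card (ZMod n) := by rw [ZMod.card, hcard, hn]
  have hVne : V.Nonempty := Finset.card_pos.mp (by omega)
  have hjH : AddSubgroup.zmultiples j ≤ stabilizer (ZMod n) V := by
    rw [AddSubgroup.zmultiples_le, mem_stabilizer_iff, Finset.vadd_finset_def]
    simpa only [vadd_eq_add, add_comm] using hj
  by_contra h2p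
  rcases Nat.even_or_odd j.val with hjeven | hjodd
  · have hpj : ¬ p ∣ j.val := fun h =>
      h2p (Nat.Coprime.mul_dvd_of_dvd_of_dvd (Nat.coprime_two_left.mpr hodd) hjeven.two_dvd h)
    have h2 := hjH (ZMod.two_mem_zmultiples_of_even_val hp hodd hn hjeven hpj)
    have hVu : V ≠ Finset.univ := fun h => by
      rw [h, Finset.card_univ, ZMod.card] at hcard
      omega
    rcases ZMod.forall_mem_iff_even_or_odd_of_two_mem_stabilizer ⟨p ^ k, by omega⟩ h2 hVne hVu
      with h | h
    exacts [hVeven h, hVodd h]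
  · have h2d := two_nsmul_mem_stabilizer_of_disjoint_vadd hcardG hdisj
    have hpk := hjH (ZMod.natCast_mem_zmultiples_of_odd_val hn hjodd)
    refine notMem_stabilizer_of_disjoint_vadd hVne hdisj
      (AddSubgroup.mem_of_two_nsmul_mem_of_odd_nsmul_mem _ (hodd.pow (n := k)) h2d ?_)
    convert AddSubgroup.nsmul_mem _ hpk d using 1
    simp only [nsmul_eq_mul, Nat.cast_pow, mul_comm]

theorem stmt14 (p k n : ℕ) (hp : p.Prime) (hodd : Odd p) (hk : 0 < k)
    (hn : n = 2 * p ^ k) (S : Set ℕ) (hS : S ⊆ Set.Icc 1 (p ^ k))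
    (hne : S ≠ Set.Icc 1 (p ^ k)) (hne' : ¬ (Set.Icc 1 (p ^ k - 1) ⊆ S))
    (V : Finset (ZMod n)) (hV : IsClique' n S V) (hcard : V.card = p ^ k)
    (hVeven : ¬ (∀ v : ZMod n, v ∈ V ↔ Even v.val))
    (hVodd : ¬ (∀ v : ZMod n, v ∈ V ↔ ¬ Even v.val))
    (j : ZMod n) (hj : V.image (· + j) = V) :
    2 * p ∣ j.val :=
  stmt14_general p k n hp hodd hn S hne' V hV hcard hVeven hVodd j hj
end

section
/- Let p be a prime, k > 0, and n ∈ {p^k, 2p^k} (with p odd in the second case). Let G be a non-empty circulant graph on n vertices with independence polynomial I(G, x) = Σ_{i=0}^n f_{i-1} x^i, where f_{i-1} is the number of independent sets of G of cardinality i. Then I(G, −1) ≠ 0, i.e., −1 is not a root of the independence polynomial. -/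
open Finset

theorem Equiv.Perm.natCard_subtype_modEq_natCard_fixed {α : Type*} [Finite α] {p e : ℕ}
    [Fact p.Prime] {σ : Equiv.Perm α} (hσ : σ ^ p ^ e = 1) {P : α → Prop}
    (hP : ∀ a, P (σ a) ↔ P a) :
    Nat.card {a // P a} ≡ Nat.card {a // P a ∧ σ a = a} [MOD p] := by
  classical
  have := Fintype.ofFinite α
  have key := card_compl_support_modEq (p := p) (n := e) (σ := σ.subtypePerm hP)
    (by ext x; simp [subtypePerm_pow, hσ])
  convert key.symm using 1
  · exact Nat.card_eq_fintype_card
  rw [← Nat.card_congr (Equiv.subtypeSubtypeEquivSubtypeInter P (fun a => σ a = a)),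
    Nat.card_eq_fintype_card, Fintype.card_subtype]
  congr 1
  ext x
  simp [Subtype.ext_iff]

theorem Finset.sum_natCard_card_eq_mul_neg_one_pow {α : Type*} [Fintype α]
    (P : Finset α → Prop) [DecidablePred P] :
    ∑ i ∈ range (Fintype.card α + 1), (Nat.card {A : Finset α // A.card = i ∧ P A} : ℤ) * (-1) ^ i
      = ∑ A ∈ univ.filter P, (-1) ^ A.card := by
  rw [← sum_fiberwise_of_maps_to (g := Finset.card) (t := range (Fintype.card α + 1))
    (fun A _ => mem_range.2 (Nat.lt_succ_of_le (card_le_univ A)))]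
  refine sum_congr rfl fun i _ => ?_
  rw [sum_congr rfl fun A hA => by rw [(mem_filter.1 hA).2], sum_const, nsmul_eq_mul,
    Nat.card_eq_fintype_card, Fintype.card_subtype, filter_filter]
  simp only [and_comm]

section Circulant

variable {n : ℕ} {S : Set ℕ}

lemma circDist_add_right (a b t : ZMod n) : circDist n (a + t) (b + t) = circDist n a b := by
  simp [circDist]

lemma circGraph_adj_add_right {a b : ZMod n} (t : ZMod n) :
    (circGraph n S).Adj (a + t) (b + t) ↔ (circGraph n S).Adj a b := by
  simp [circGraph, circDist_add_right]

lemma circDist_zero_natCast [NeZero n] {s : ℕ} (hs : s ≤ n / 2) : circDist n 0 s = s := by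
  have hsn : s < n := by have := NeZero.pos n; omega
  rcases Nat.eq_zero_or_pos s with rfl | hs0
  · simp [circDist]
  have : NeZero (s : ZMod n) :=
    ⟨by simpa [ZMod.natCast_eq_zero_iff] using Nat.not_dvd_of_pos_of_lt hs0 hsn⟩
  rw [circDist, zero_sub, sub_zero, ZMod.val_neg_of_ne_zero, ZMod.val_cast_of_lt hsn]
  omega

lemma not_isIndepSet'_univ [NeZero n] (hS : S ⊆ Set.Icc 1 (n / 2)) (hSne : S.Nonempty) :
    ¬ IsIndepSet' n S univ := by
  obtain ⟨s, hs⟩ := hSne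
  obtain ⟨hs1, hs2⟩ := hS hs
  have hdist := circDist_zero_natCast (n := n) hs2
  refine fun h => h 0 (mem_univ _) s (mem_univ _) ⟨fun h0 => ?_, by rwa [hdist]⟩
  rw [← h0, circDist, sub_self, ZMod.val_zero, min_self] at hdist
  omega

def rotate (c : ZMod n) : Equiv.Perm (Finset (ZMod n)) :=
  (Equiv.addRight c).finsetCongr

lemma rotate_apply (c : ZMod n) (A : Finset (ZMod n)) :
    rotate c A = A.map (Equiv.addRight c).toEmbedding := rfl

lemma rotate_zero : rotate (0 : ZMod n) = 1 :=
  Equiv.ext fun A => by simp [rotate_apply, Equiv.Perm.one_def]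

lemma rotate_pow (c : ZMod n) (j : ℕ) : rotate c ^ j = rotate (j • c) := by
  induction j with
  | zero => rw [pow_zero, zero_nsmul, rotate_zero]
  | succ j ih =>
    refine Equiv.ext fun A => ?_
    rw [pow_succ', Equiv.Perm.mul_apply, ih, rotate_apply, rotate_apply, rotate_apply, map_map]
    congr 1
    ext x
    simp only [Function.Embedding.trans_apply, Equiv.coe_toEmbedding, Equiv.coe_addRight]
    rw [succ_nsmul, add_assoc]

lemma card_rotate (c : ZMod n) (A : Finset (ZMod n)) : (rotate c A).card = A.card :=
  card_map _

lemma isIndepSet'_rotate_iff (c : ZMod n) (A : Finset (ZMod n)) :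
    IsIndepSet' n S (rotate c A) ↔ IsIndepSet' n S A := by
  simp only [IsIndepSet', rotate_apply, forall_mem_map, Equiv.coe_toEmbedding,
    Equiv.coe_addRight, circGraph_adj_add_right]

lemma add_nsmul_mem_of_rotate_eq {c : ZMod n} {A : Finset (ZMod n)} (hA : rotate c A = A)
    {a : ZMod n} (ha : a ∈ A) (j : ℕ) : a + j • c ∈ A := by
  rw [← Equiv.Perm.pow_apply_eq_self_of_apply_eq_self hA j, rotate_pow, rotate_apply]
  exact mem_map_of_mem _ ha

end Circulant

section Invariant

variable {n : ℕ} [NeZero n] {S : Set ℕ}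

lemma mem_of_rotate_eq {m : ℕ} (hm : m ∣ n) {A : Finset (ZMod n)}
    (hA : rotate (m : ZMod n) A = A) {a x : ZMod n} (ha : a ∈ A)
    (hx : ZMod.castHom hm (ZMod m) x = ZMod.castHom hm (ZMod m) a) :
    x ∈ A := by
  have hdvd : m ∣ (x - a).val := by
    rw [← ZMod.natCast_eq_zero_iff, ZMod.natCast_val, ← ZMod.castHom_apply (h := hm), map_sub,
      hx, sub_self]
  obtain ⟨j, hj⟩ := hdvd
  have hx' : x = a + j • (m : ZMod n) := by
    rw [nsmul_eq_mul, mul_comm, ← Nat.cast_mul, ← hj, ZMod.natCast_zmod_val, add_sub_cancel]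
  exact hx' ▸ add_nsmul_mem_of_rotate_eq hA ha j

open Classical in
noncomputable def invariantIndepSets (n : ℕ) [NeZero n] (S : Set ℕ) (c : ZMod n) :
    Finset (Finset (ZMod n)) :=
  univ.filter fun A => IsIndepSet' n S A ∧ rotate c A = A

lemma mem_invariantIndepSets {c : ZMod n} {A : Finset (ZMod n)} :
    A ∈ invariantIndepSets n S c ↔ IsIndepSet' n S A ∧ rotate c A = A := by
  classical
  rw [invariantIndepSets, mem_filter, and_iff_right (mem_univ A)]

theorem indepCount_modEq {p e : ℕ} [Fact p.Prime] {c : ZMod n} (hc : p ^ e • c = 0) (i : ℕ) :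
    indepCount n S i ≡
      Nat.card {A : Finset (ZMod n) // A.card = i ∧ IsIndepSet' n S A ∧ rotate c A = A}
        [MOD p] := by
  have h := Equiv.Perm.natCard_subtype_modEq_natCard_fixed (p := p) (e := e) (σ := rotate c)
    (by rw [rotate_pow, hc, rotate_zero]) (P := fun A => A.card = i ∧ IsIndepSet' n S A)
    (fun A => by rw [card_rotate, isIndepSet'_rotate_iff])
  simpa only [indepCount, and_assoc] using h

theorem sum_indepCount_mul_neg_one_pow_modEq {p e : ℕ} [Fact p.Prime] {c : ZMod n}
    (hc : p ^ e • c = 0) :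
    ∑ i ∈ range (n + 1), (indepCount n S i : ℤ) * (-1) ^ i ≡
      ∑ A ∈ invariantIndepSets n S c, (-1) ^ A.card [ZMOD p] := by
  classical
  rw [invariantIndepSets, ← sum_natCard_card_eq_mul_neg_one_pow, ZMod.card]
  exact Int.ModEq.sum fun i _ =>
    (Int.natCast_modEq_iff.2 (indepCount_modEq hc i)).mul_right _

end Invariant

section Evaluation

variable {S : Set ℕ}

lemma empty_mem_invariantIndepSets {n : ℕ} [NeZero n] (c : ZMod n) :
    ∅ ∈ invariantIndepSets n S c := by
  rw [mem_invariantIndepSets, rotate_apply, map_empty]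
  exact ⟨fun a ha => absurd ha (notMem_empty a), rfl⟩

theorem invariantIndepSets_one {n : ℕ} [NeZero n] (hS : S ⊆ Set.Icc 1 (n / 2))
    (hSne : S.Nonempty) : invariantIndepSets n S 1 = {∅} := by
  refine eq_singleton_iff_unique_mem.2 ⟨empty_mem_invariantIndepSets 1, fun A hA => ?_⟩
  obtain ⟨hind, hrot⟩ := mem_invariantIndepSets.1 hA
  by_contra hne
  obtain ⟨a, ha⟩ := nonempty_iff_ne_empty.2 hne
  have huniv : A = univ := eq_univ_of_forall fun x =>
    mem_of_rotate_eq (one_dvd n) (by rwa [Nat.cast_one]) ha (Subsingleton.elim _ _)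
  exact not_isIndepSet'_univ hS hSne (huniv ▸ hind)

variable {q : ℕ} [NeZero q]

def parityClass (q : ℕ) [NeZero q] (b : ZMod 2) : Finset (ZMod (2 * q)) :=
  univ.filter fun x => ZMod.castHom (dvd_mul_right 2 q) (ZMod 2) x = b

lemma mem_parityClass {b : ZMod 2} {x : ZMod (2 * q)} :
    x ∈ parityClass q b ↔ ZMod.castHom (dvd_mul_right 2 q) (ZMod 2) x = b := by
  simp only [parityClass, mem_filter, mem_univ, true_and]

lemma rotate_parityClass (c : ZMod (2 * q)) (b : ZMod 2) :
    rotate c (parityClass q b) =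
      parityClass q (b + ZMod.castHom (dvd_mul_right 2 q) (ZMod 2) c) := by
  ext x
  rw [rotate_apply, mem_map_equiv, mem_parityClass, mem_parityClass, Equiv.addRight_symm,
    Equiv.coe_addRight, map_add, map_neg, add_neg_eq_iff_eq_add]

lemma card_parityClass (b : ZMod 2) : (parityClass q b).card = q := by
  have hsum := card_eq_sum_card_fiberwise (s := (univ : Finset (ZMod (2 * q))))
    (f := ZMod.castHom (dvd_mul_right 2 q) (ZMod 2)) (t := univ) (fun _ _ => mem_univ _)
  have hrot : (parityClass q 1).card = (parityClass q 0).card := by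
    rw [← card_rotate 1, rotate_parityClass, map_one]
    rfl
  have huniv : (univ : Finset (ZMod 2)) = {0, 1} := rfl
  rw [card_univ, ZMod.card, huniv, sum_pair zero_ne_one] at hsum
  change 2 * q = (parityClass q 0).card + (parityClass q 1).card at hsum
  fin_cases b <;> simp only [Fin.zero_eta, Fin.mk_one] <;> omega

lemma isIndepSet'_parityClass_iff (b : ZMod 2) :
    IsIndepSet' (2 * q) S (parityClass q b) ↔ IsIndepSet' (2 * q) S (parityClass q 0) := by
  rw [← isIndepSet'_rotate_iff (b.val : ZMod (2 * q)) (parityClass q 0), rotate_parityClass,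
    zero_add, map_natCast, ZMod.natCast_zmod_val]

lemma rotate_two_parityClass (b : ZMod 2) : rotate 2 (parityClass q b) = parityClass q b := by
  rw [rotate_parityClass, map_ofNat, show (2 : ZMod 2) = 0 from rfl, add_zero]

lemma eq_parityClass_of_mem_invariantIndepSets (hS : S ⊆ Set.Icc 1 (2 * q / 2))
    (hSne : S.Nonempty) {A : Finset (ZMod (2 * q))} (hA : A ∈ invariantIndepSets (2 * q) S 2)
    {a : ZMod (2 * q)} (ha : a ∈ A) :
    A = parityClass q (ZMod.castHom (dvd_mul_right 2 q) (ZMod 2) a) := by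
  obtain ⟨hind, hrot⟩ := mem_invariantIndepSets.1 hA
  replace hrot : rotate ((2 : ℕ) : ZMod (2 * q)) A = A := by rwa [Nat.cast_ofNat]
  have hclass : ∀ {x}, x ∈ A → parityClass q (ZMod.castHom (dvd_mul_right 2 q) (ZMod 2) x) ⊆ A :=
    fun hx y hy => mem_of_rotate_eq _ hrot hx (mem_parityClass.1 hy)
  refine (Subset.antisymm (fun x hx => mem_parityClass.2 ?_) (hclass ha))
  by_contra hxa
  have huniv : A = univ := eq_univ_of_forall fun y => by
    have hZMod2 : ∀ u v w : ZMod 2, u ≠ v → w = u ∨ w = v := by decide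
    rcases hZMod2 _ _ (ZMod.castHom (dvd_mul_right 2 q) (ZMod 2) y) hxa with hy | hy
    · exact hclass hx (mem_parityClass.2 hy)
    · exact hclass ha (mem_parityClass.2 hy)
  exact not_isIndepSet'_univ hS hSne (huniv ▸ hind)

lemma natCast_val_mem_parityClass (b : ZMod 2) : (b.val : ZMod (2 * q)) ∈ parityClass q b := by
  rw [mem_parityClass, map_natCast, ZMod.natCast_zmod_val]

lemma parityClass_mem_invariantIndepSets_iff (b : ZMod 2) :
    parityClass q b ∈ invariantIndepSets (2 * q) S 2 ↔
      IsIndepSet' (2 * q) S (parityClass q 0) := by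
  rw [mem_invariantIndepSets, rotate_two_parityClass, and_iff_left rfl,
    isIndepSet'_parityClass_iff]

open Classical in
theorem sum_invariantIndepSets_two (hq : Odd q) (hS : S ⊆ Set.Icc 1 (2 * q / 2))
    (hSne : S.Nonempty) :
    ∑ A ∈ invariantIndepSets (2 * q) S 2, (-1 : ℤ) ^ A.card =
      if IsIndepSet' (2 * q) S (parityClass q 0) then -1 else 1 := by
  split_ifs with h0
  · have hinv : invariantIndepSets (2 * q) S 2 = {∅, parityClass q 0, parityClass q 1} := by
      ext A
      constructor
      · intro hA
        rcases A.eq_empty_or_nonempty with rfl | ⟨a, ha⟩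
        · exact mem_insert_self _ _
        rw [eq_parityClass_of_mem_invariantIndepSets hS hSne hA ha]
        rcases (by decide : ∀ b : ZMod 2, b = 0 ∨ b = 1)
          (ZMod.castHom (dvd_mul_right 2 q) (ZMod 2) a) with h | h <;> simp [h]
      · simp only [mem_insert, mem_singleton]
        rintro (rfl | rfl | rfl)
        exacts [empty_mem_invariantIndepSets 2, (parityClass_mem_invariantIndepSets_iff 0).2 h0,
          (parityClass_mem_invariantIndepSets_iff 1).2 h0]
    have hempty : ∀ b, ∅ ≠ parityClass q b := fun b h =>
      notMem_empty _ (h ▸ natCast_val_mem_parityClass b)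
    have h01 : parityClass q 0 ≠ parityClass q 1 := fun h => by
      have h0mem := natCast_val_mem_parityClass (q := q) 0
      rw [h, mem_parityClass] at h0mem
      simp at h0mem
    rw [hinv, sum_insert (by simp [hempty]), sum_pair h01, card_empty, card_parityClass,
      card_parityClass, hq.neg_one_pow]
    norm_num
  · have hinv : invariantIndepSets (2 * q) S 2 = {∅} := by
      refine eq_singleton_iff_unique_mem.2 ⟨empty_mem_invariantIndepSets 2, fun A hA => ?_⟩
      by_contra hne
      obtain ⟨a, ha⟩ := nonempty_iff_ne_empty.2 hne
      rw [eq_parityClass_of_mem_invariantIndepSets hS hSne hA ha,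
        parityClass_mem_invariantIndepSets_iff] at hA
      exact h0 hA
    rw [hinv, sum_singleton, card_empty, pow_zero]

end Evaluation

lemma Int.ne_zero_of_modEq_of_isUnit {p : ℕ} [Fact p.Prime] {x u : ℤ} (h : x ≡ u [ZMOD p])
    (hu : IsUnit u) : x ≠ 0 := by
  rintro rfl
  have hcast := (ZMod.intCast_eq_intCast_iff 0 u p).2 h
  rw [Int.cast_zero] at hcast
  exact (hu.map (Int.castRingHom (ZMod p))).ne_zero hcast.symm

theorem stmt17_general (p k n : ℕ) (hp : p.Prime)
    (hn : n = p ^ k ∨ (Odd p ∧ n = 2 * p ^ k))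
    (S : Set ℕ) (hS : S ⊆ Set.Icc 1 (n / 2)) (hSne : S.Nonempty) :
    ∑ i ∈ Finset.range (n + 1), (indepCount n S i : ℤ) * (-1) ^ i ≠ 0 := by
  have := Fact.mk hp
  have : NeZero (p ^ k) := ⟨pow_ne_zero k hp.ne_zero⟩
  rcases hn with rfl | ⟨hodd, rfl⟩
  · have h := sum_indepCount_mul_neg_one_pow_modEq (S := S) (e := k)
      (c := (1 : ZMod (p ^ k))) (by rw [nsmul_one, ZMod.natCast_self])
    rw [invariantIndepSets_one hS hSne, sum_singleton, card_empty, pow_zero] at h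
    exact Int.ne_zero_of_modEq_of_isUnit h isUnit_one
  · have h := sum_indepCount_mul_neg_one_pow_modEq (S := S) (e := k)
      (c := (2 : ZMod (2 * p ^ k)))
      (by rw [nsmul_eq_mul, ← ZMod.natCast_self (2 * p ^ k)]; push_cast; ring)
    rw [sum_invariantIndepSets_two hodd.pow hS hSne] at h
    refine Int.ne_zero_of_modEq_of_isUnit h ?_
    split_ifs <;> simp

theorem stmt17 (p k n : ℕ) (hp : p.Prime) (hk : 0 < k)
    (hn : n = p ^ k ∨ (Odd p ∧ n = 2 * p ^ k))
    (S : Set ℕ) (hS : S ⊆ Set.Icc 1 (n / 2)) (hSne : S.Nonempty) :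
    ∑ i ∈ Finset.range (n + 1), (indepCount n S i : ℤ) * (-1) ^ i ≠ 0 :=
  stmt17_general p k n hp hn S hS hSne
end
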